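/- The quartic polynomial identity: substituting ỹ0,...,ỹ4 (the components of the parametrization φ) into f(y0,...,y4) = y0*(y0^3+y1^3+y2^3+y3^3+y4^3)+3*y1*y2*y3*y4 yields the zero polynomial in Z[t1,t2,t3]. Hence the image of the parametrization lies on the Burkhardt quartic over any ring. -/
import Mathlib


open MvPolynomial

namespace BurkhardtParam

/-- `t₁, t₂, t₃` as generators of `ℤ[t₁,t₂,t₃]`. -/
noncomputable def t1 : MvPolynomial (Fin 3) ℤ := X 0
noncomputable def t2 : MvPolynomial (Fin 3) ℤ := X 1
noncomputable def t3 : MvPolynomial (Fin 3) ℤ := X 2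

/-- The components `ỹ₀,…,ỹ₄` of the parametrization `φ : ℙ³ ⤏ B` on the chart `(1:t₁:t₂:t₃)`. -/
noncomputable def y0 : MvPolynomial (Fin 3) ℤ :=
  t1^3 - 3*t1^2*t3 - 3*t1*t2^2 - 3*t1*t2*t3 - t2^3 - 1
noncomputable def y1 : MvPolynomial (Fin 3) ℤ :=
  -t1^3 + 3*t1^2*t3 - 3*t1*t3^2 + t2^3 + 1
noncomputable def y2 : MvPolynomial (Fin 3) ℤ :=
  -t1^4 + t1^3*t2 + 3*t1^3*t3 - 3*t1^2*t2*t3 - 3*t1^2*t3^2 - 2*t1*t2^3 - 3*t1*t2^2*t3 + t1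
    - t2^4 - t2
noncomputable def y3 : MvPolynomial (Fin 3) ℤ :=
  -t1^4 + 4*t1^3*t3 + 3*t1^2*t2^2 + 3*t1^2*t2*t3 - 3*t1^2*t3^2 + t1*t2^3 - 3*t1*t2^2*t3
    - 3*t1*t2*t3^2 + t1 - t2^3*t3 - t3
noncomputable def y4 : MvPolynomial (Fin 3) ℤ :=
  -t1^4 - t1^3*t2 + 2*t1^3*t3 + 3*t1^2*t2*t3 + t1*t2^3 + 3*t1*t2^2*t3 + t1 + t2^4 + t2^3*t3
    + t2 + t3

/-- Substituting the components `ỹ₀,…,ỹ₄` of the parametrization into the Burkhardt quartic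
polynomial `f(y₀,…,y₄) = y₀(y₀³+y₁³+y₂³+y₃³+y₄³)+3y₁y₂y₃y₄` yields the zero polynomial
in `ℤ[t₁,t₂,t₃]`; hence the image of `φ` lies on the Burkhardt quartic over any ring. -/
theorem param_lands_on_burkhardt :
    y0 * (y0 ^ 3 + y1 ^ 3 + y2 ^ 3 + y3 ^ 3 + y4 ^ 3) + 3 * (y1 * y2 * y3 * y4) = 0 := by
  unfold y0 y1 y2 y3 y4 t1 t2 t3
  ring

end BurkhardtParam
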